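/- For a finite hypergraph G over a field k, the first path homology of the hypergraph complex satisfies dim H_1 = 2|E_Ḡ| − |V_G| + |C_Ḡ| − rank(d_2), and consequently dim H_1 ≤ 2|E_Ḡ| − |V_G| + |C_Ḡ|. -/

import Mathlib

/-! Directed edges `(v, w)` with `v ~ w` form a basis of `Ω₁`, so `dim Ω₁ = 2|E|`. The image of
`d₁` on `Ω₁` is the kernel of the surjection `k^V → k^{C}` summing coefficients over each
connected component (a vertex is joined to its component's representative by a path, whose
edges telescope), so `rank d₁ = |V| - |C|`. Rank–nullity gives `dim ker d₁ = 2|E| - |V| + |C|`,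
and `H₁ = ker d₁ / im d₂` with `im d₂ ⊆ ker d₁` because `d₁ ∘ d₂ = 0`. -/

set_option maxSynthPendingDepth 3

/-- The boundary map `d_1` sending a directed edge `(v₀, v₁)` to `(v₁) - (v₀)`. -/
noncomputable def edgeBoundary (k V : Type) [Field k] : ((V × V) →₀ k) →ₗ[k] (V →₀ k) :=
  (Finsupp.lift (V →₀ k) k (V × V))
    (fun e => Finsupp.single e.2 (1 : k) - Finsupp.single e.1 (1 : k))

/-- The boundary map `d_2` sending `(v₀, v₁, v₂)` to
`(v₁, v₂) - (v₀, v₂) + (v₀, v₁)`. -/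
noncomputable def triangleBoundary (k V : Type) [Field k] :
    ((V × V × V) →₀ k) →ₗ[k] ((V × V) →₀ k) :=
  (Finsupp.lift ((V × V) →₀ k) k (V × V × V))
    (fun t => Finsupp.single (t.2.1, t.2.2) (1 : k)
      - Finsupp.single (t.1, t.2.2) (1 : k) + Finsupp.single (t.1, t.2.1) (1 : k))

/-- The degree-one component of the hypergraph (path) complex of a graph `G`:
the span of the directed edges of `G`. -/
noncomputable def omega1 (k : Type) {V : Type} [Field k] (G : SimpleGraph V) :
    Submodule k ((V × V) →₀ k) :=
  Submodule.span k {f | ∃ v w : V, G.Adj v w ∧ f = Finsupp.single (v, w) (1 : k)}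

/-- The degree-two component of the hypergraph (path) complex of a graph `G`:
the `∂`-invariant part of the span of anchor sequences of length two. -/
noncomputable def omega2 (k : Type) {V : Type} [Field k] (G : SimpleGraph V) :
    Submodule k ((V × V × V) →₀ k) :=
  (Submodule.span k {f | ∃ u v w : V, G.Adj u v ∧ G.Adj v w ∧
      f = Finsupp.single (u, v, w) (1 : k)})
    ⊓ Submodule.comap (triangleBoundary k V) (omega1 k G)

/-- The first homology `H₁ = ker d₁ / Im d₂` of the hypergraph (path) complex. -/
noncomputable def pathH1 (k : Type) {V : Type} [Field k] (G : SimpleGraph V) : Type :=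
  ↥(omega1 k G ⊓ LinearMap.ker (edgeBoundary k V)) ⧸
    (((omega2 k G).map (triangleBoundary k V)).comap
      (omega1 k G ⊓ LinearMap.ker (edgeBoundary k V)).subtype)

noncomputable instance (k : Type) {V : Type} [Field k] (G : SimpleGraph V) :
    AddCommGroup (pathH1 k G) := inferInstanceAs (AddCommGroup (_ ⧸ _))

noncomputable instance (k : Type) {V : Type} [Field k] (G : SimpleGraph V) :
    Module k (pathH1 k G) := inferInstanceAs (Module k (_ ⧸ _))

lemma edgeBoundary_single {k V : Type} [Field k] (p : V × V) (c : k) :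
    edgeBoundary k V (Finsupp.single p c)
      = c • (Finsupp.single p.2 1 - Finsupp.single p.1 1) := by
  simp [edgeBoundary, Finsupp.lift_apply, Finsupp.sum_single_index]

lemma triangleBoundary_single {k V : Type} [Field k] (t : V × V × V) (c : k) :
    triangleBoundary k V (Finsupp.single t c)
      = c • (Finsupp.single (t.2.1, t.2.2) 1 - Finsupp.single (t.1, t.2.2) 1
          + Finsupp.single (t.1, t.2.1) 1) := by
  simp [triangleBoundary, Finsupp.lift_apply, Finsupp.sum_single_index]

lemma edgeBoundary_comp_triangleBoundary (k V : Type) [Field k] :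
    edgeBoundary k V ∘ₗ triangleBoundary k V = 0 := by
  refine Finsupp.lhom_ext fun t c => ?_
  simp only [LinearMap.comp_apply, LinearMap.zero_apply, triangleBoundary_single, map_smul,
    map_add, map_sub, edgeBoundary_single]
  module

lemma Submodule.finrank_map_add_finrank_inf_ker {K M N : Type*} [DivisionRing K]
    [AddCommGroup M] [Module K M] [AddCommGroup N] [Module K N]
    (f : M →ₗ[K] N) (p : Submodule K M) [FiniteDimensional K p] :
    Module.finrank K (p.map f) + Module.finrank K ↥(p ⊓ LinearMap.ker f)
      = Module.finrank K p := by
  rw [← (Submodule.comapSubtypeEquivOfLe inf_le_left).finrank_eq, Submodule.comap_inf,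
    Submodule.comap_subtype_self, top_inf_eq, ← LinearMap.ker_domRestrict,
    ← LinearMap.range_domRestrict]
  exact (f.domRestrict p).finrank_range_add_finrank_ker

lemma Submodule.finrank_quotient_comap_subtype_add_finrank {K M : Type*} [DivisionRing K]
    [AddCommGroup M] [Module K M] {p q : Submodule K M} [FiniteDimensional K p] (hqp : q ≤ p) :
    Module.finrank K (p ⧸ q.comap p.subtype) + Module.finrank K q = Module.finrank K p := by
  rw [← (Submodule.comapSubtypeEquivOfLe hqp).finrank_eq]
  exact Submodule.finrank_quotient_add_finrank _

section PathComplex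

variable (k : Type) {V : Type} [Field k] (G : SimpleGraph V)

lemma omega1_eq_supported :
    omega1 k G = Finsupp.supported k k {p : V × V | G.Adj p.1 p.2} := by
  rw [Finsupp.supported_eq_span_single, omega1]
  congr 1
  ext f
  constructor
  · rintro ⟨v, w, hadj, rfl⟩
    exact ⟨(v, w), hadj, rfl⟩
  · rintro ⟨⟨v, w⟩, hadj, rfl⟩
    exact ⟨v, w, hadj, rfl⟩

lemma finrank_omega1 [Fintype V] [Fintype G.edgeSet] :
    Module.finrank k (omega1 k G) = 2 * G.edgeFinset.card := by
  classical
  let darts : {p : V × V | G.Adj p.1 p.2} ≃ G.Dart :=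
    ⟨fun p => ⟨p.1, p.2⟩, fun d => ⟨d.toProd, d.adj⟩, fun _ => rfl, fun _ => rfl⟩
  rw [omega1_eq_supported, (Finsupp.supportedEquivFinsupp _).finrank_eq,
    Module.finrank_finsupp_self, Fintype.card_congr darts]
  convert G.dart_card_eq_twice_card_edges using 3
  ext; simp

lemma map_triangleBoundary_omega2_le :
    (omega2 k G).map (triangleBoundary k V) ≤ omega1 k G ⊓ LinearMap.ker (edgeBoundary k V) := by
  rintro _ ⟨y, ⟨-, hy⟩, rfl⟩
  exact ⟨hy, LinearMap.congr_fun (edgeBoundary_comp_triangleBoundary k V) y⟩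

noncomputable abbrev componentSum : (V →₀ k) →ₗ[k] (G.ConnectedComponent →₀ k) :=
  Finsupp.lmapDomain k k G.connectedComponentMk

variable {k G}

lemma single_sub_single_mem_map_omega1 {u v : V} (h : G.Reachable u v) :
    Finsupp.single v 1 - Finsupp.single u 1 ∈ (omega1 k G).map (edgeBoundary k V) := by
  obtain ⟨p⟩ := h
  induction p with
  | nil => simp
  | @cons a b c hab p ih =>
    have hedge : Finsupp.single b 1 - Finsupp.single a 1 ∈ (omega1 k G).map (edgeBoundary k V) :=
      ⟨Finsupp.single (a, b) 1, Submodule.subset_span ⟨a, b, hab, rfl⟩, by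
        simp [edgeBoundary_single]⟩
    simpa using Submodule.add_mem _ ih hedge

lemma sub_mapDomain_out_mem_map_omega1 (f : V →₀ k) :
    f - f.mapDomain (fun v => (G.connectedComponentMk v).out)
      ∈ (omega1 k G).map (edgeBoundary k V) := by
  induction f using Finsupp.induction_linear with
  | zero => simp
  | add f g hf hg =>
    rw [Finsupp.mapDomain_add, add_sub_add_comm]
    exact Submodule.add_mem _ hf hg
  | single v c =>
    have hv : G.Reachable (G.connectedComponentMk v).out v :=
      SimpleGraph.ConnectedComponent.eq.mp (G.connectedComponentMk v).out_eq
    convert Submodule.smul_mem _ c (single_sub_single_mem_map_omega1 hv) using 1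
    simp [smul_sub, Finsupp.mapDomain_single]

variable (k G)

lemma map_edgeBoundary_omega1 :
    (omega1 k G).map (edgeBoundary k V) = LinearMap.ker (componentSum k G) := by
  refine le_antisymm ?_ fun f hf => ?_
  · rw [omega1, Submodule.map_span, Submodule.span_le]
    rintro _ ⟨_, ⟨v, w, hvw, rfl⟩, rfl⟩
    have hvw : G.connectedComponentMk w = G.connectedComponentMk v :=
      SimpleGraph.ConnectedComponent.eq.mpr hvw.symm.reachable
    simp [edgeBoundary_single, Finsupp.mapDomain_sub, Finsupp.mapDomain_single, hvw]
  · have hout : f.mapDomain (fun v => (G.connectedComponentMk v).out) = 0 := by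
      rw [← Function.comp_def (fun c : G.ConnectedComponent => c.out), Finsupp.mapDomain_comp,
        show f.mapDomain G.connectedComponentMk = 0 from hf, Finsupp.mapDomain_zero]
    simpa [hout] using sub_mapDomain_out_mem_map_omega1 (G := G) f

lemma finrank_map_edgeBoundary_omega1_add_card [Fintype V] :
    Module.finrank k ((omega1 k G).map (edgeBoundary k V)) + Nat.card G.ConnectedComponent
      = Fintype.card V := by
  classical
  have hsurj : LinearMap.range (componentSum k G) = ⊤ :=
    LinearMap.range_eq_top.mpr (Finsupp.mapDomain_surjective Quot.mk_surjective)
  have h := (componentSum k G).finrank_range_add_finrank_ker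
  rw [hsurj, finrank_top, Module.finrank_finsupp_self, Module.finrank_finsupp_self] at h
  rw [map_edgeBoundary_omega1, Nat.card_eq_fintype_card]
  omega

lemma finrank_pathH1_add_finrank_map_triangleBoundary [Fintype V] :
    Module.finrank k (pathH1 k G) + Module.finrank k ((omega2 k G).map (triangleBoundary k V))
      = Module.finrank k ↥(omega1 k G ⊓ LinearMap.ker (edgeBoundary k V)) :=
  Submodule.finrank_quotient_comap_subtype_add_finrank (map_triangleBoundary_omega2_le k G)

end PathComplex

theorem statement16_general (k V : Type) [Field k] [Fintype V]
    (G : SimpleGraph V) [Fintype G.edgeSet] :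
    (Module.finrank k (pathH1 k G) : ℤ)
        = 2 * (G.edgeFinset.card : ℤ) - Fintype.card V + Nat.card G.ConnectedComponent
          - Module.finrank k ↥((omega2 k G).map (triangleBoundary k V)) ∧
    (Module.finrank k (pathH1 k G) : ℤ)
        ≤ 2 * (G.edgeFinset.card : ℤ) - Fintype.card V
          + Nat.card G.ConnectedComponent := by
  have hH1 := finrank_pathH1_add_finrank_map_triangleBoundary k G
  have hcycles := Submodule.finrank_map_add_finrank_inf_ker (edgeBoundary k V) (omega1 k G)
  have hboundaries := finrank_map_edgeBoundary_omega1_add_card k G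
  rw [finrank_omega1] at hcycles
  constructor <;> omega

/-- For a finite hypergraph (hyperedge set `E`) with essential graph
`G = Ḡ`, over a field `k`, the first path homology of the hypergraph complex
satisfies `dim H₁ = 2|E_Ḡ| - |V| + |C_Ḡ| - rank d₂`, and consequently
`dim H₁ ≤ 2|E_Ḡ| - |V| + |C_Ḡ|`. -/
theorem statement16 (k V : Type) [Field k] [Fintype V] [DecidableEq V]
    (E : Finset (Finset V))
    (G : SimpleGraph V) [DecidableRel G.Adj] [Fintype G.edgeSet]
    (hG : ∀ v w : V, G.Adj v w ↔ v ≠ w ∧ ∃ e ∈ E, v ∈ e ∧ w ∈ e) :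
    (Module.finrank k (pathH1 k G) : ℤ)
        = 2 * (G.edgeFinset.card : ℤ) - Fintype.card V + Nat.card G.ConnectedComponent
          - Module.finrank k ↥((omega2 k G).map (triangleBoundary k V)) ∧
    (Module.finrank k (pathH1 k G) : ℤ)
        ≤ 2 * (G.edgeFinset.card : ℤ) - Fintype.card V
          + Nat.card G.ConnectedComponent :=
  statement16_general k V G
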